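/- The norm N on ℝ³ defined by N(a₁, a₂, a₃) = max{|a₁| + |a₃|/2, |a₂| + |a₃|} has the positive Daugavet property: for every nonzero v ∈ ℝ³ with v ≥ 0 coordinatewise and every nonzero linear functional f on ℝ³ with nonnegative coefficients, the rank-one operator T a = f(a) · v satisfies ‖Id + T‖ = 1 + ‖T‖, where the operator norm is the one induced by N. -/

import Mathlib

/-- The norm `N (a₁, a₂, a₃) = max {|a₁| + |a₃|/2, |a₂| + |a₃|}` on `ℝ³`. -/
noncomputable def hipRoofNorm (a : Fin 3 → ℝ) : ℝ := max (|a 0| + |a 2| / 2) (|a 1| + |a 2|)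

/-- The operator norm on maps `ℝ³ → ℝ³` induced by the norm `hipRoofNorm`. -/
noncomputable def hipRoofOpNorm (S : (Fin 3 → ℝ) → (Fin 3 → ℝ)) : ℝ :=
  sSup {r : ℝ | ∃ a : Fin 3 → ℝ, hipRoofNorm a ≤ 1 ∧ r = hipRoofNorm (S a)}

/-!
For `T a = f(a) • v`, both `‖T‖ ≤ ‖f‖ ‖v‖` and `‖Id + T‖ ≤ 1 + ‖f‖ ‖v‖` are immediate.
For `f ≥ 0` the dual norm `‖f‖` is attained on the ridge `{w ≥ 0 | w₁ + w₃/2 = 1 = w₂ + w₃}`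
of the unit ball, namely at the vertex `(1, 1, 0)` or `(1/2, 0, 1)`. On the ridge both terms of
the maximum defining `N` are active, so `N (w + u) = 1 + N u` for every `u ≥ 0`; taking
`u = f(w) • v` shows that both bounds are attained.
-/

noncomputable def hipRoofDualNorm (c : Fin 3 → ℝ) : ℝ := max (|c 0| + |c 1|) (|c 0| / 2 + |c 2|)

def IsHipRoofRidge (w : Fin 3 → ℝ) : Prop := (∀ i, 0 ≤ w i) ∧ w 0 + w 2 / 2 = 1 ∧ w 1 + w 2 = 1

lemma hipRoofNorm_nonneg (a : Fin 3 → ℝ) : 0 ≤ hipRoofNorm a :=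
  le_trans (by positivity) (le_max_right _ _)

lemma hipRoofDualNorm_nonneg (c : Fin 3 → ℝ) : 0 ≤ hipRoofDualNorm c :=
  le_trans (by positivity) (le_max_left _ _)

lemma hipRoofNorm_add_le (x y : Fin 3 → ℝ) :
    hipRoofNorm (x + y) ≤ hipRoofNorm x + hipRoofNorm y := by
  unfold hipRoofNorm
  simp only [Pi.add_apply]
  have h0 := abs_add_le (x 0) (y 0)
  have h1 := abs_add_le (x 1) (y 1)
  have h2 := abs_add_le (x 2) (y 2)
  have := le_max_left (|x 0| + |x 2| / 2) (|x 1| + |x 2|)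
  have := le_max_right (|x 0| + |x 2| / 2) (|x 1| + |x 2|)
  have := le_max_left (|y 0| + |y 2| / 2) (|y 1| + |y 2|)
  have := le_max_right (|y 0| + |y 2| / 2) (|y 1| + |y 2|)
  exact max_le (by linarith) (by linarith)

lemma hipRoofNorm_smul (s : ℝ) (w : Fin 3 → ℝ) :
    hipRoofNorm (s • w) = |s| * hipRoofNorm w := by
  unfold hipRoofNorm
  simp only [Pi.smul_apply, smul_eq_mul, abs_mul]
  rw [mul_max_of_nonneg _ _ (abs_nonneg s)]
  congr 1 <;> ring

lemma hipRoofOpNorm_eq_of_le_of_eq {S : (Fin 3 → ℝ) → (Fin 3 → ℝ)} {M : ℝ} {w : Fin 3 → ℝ}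
    (hle : ∀ a, hipRoofNorm a ≤ 1 → hipRoofNorm (S a) ≤ M)
    (hw : hipRoofNorm w ≤ 1) (hSw : hipRoofNorm (S w) = M) :
    hipRoofOpNorm S = M :=
  IsGreatest.csSup_eq ⟨⟨w, hw, hSw.symm⟩, by rintro r ⟨a, ha, rfl⟩; exact hle a ha⟩

lemma abs_sum_mul_le_hipRoofDualNorm (c a : Fin 3 → ℝ) (ha : hipRoofNorm a ≤ 1) :
    |∑ i, c i * a i| ≤ hipRoofDualNorm c := by
  have h02 : |a 0| + |a 2| / 2 ≤ 1 := (le_max_left _ _).trans ha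
  have h12 : |a 1| + |a 2| ≤ 1 := (le_max_right _ _).trans ha
  have hsum : |∑ i, c i * a i| ≤ |c 0| * |a 0| + |c 1| * |a 1| + |c 2| * |a 2| :=
    (Finset.abs_sum_le_sum_abs _ _).trans_eq (by simp [Fin.sum_univ_three, abs_mul])
  -- the bound is a convex combination of the two values with weights `1 - |a₃|` and `|a₃|`
  have hconv : |c 0| * |a 0| + |c 1| * |a 1| + |c 2| * |a 2| ≤
      (1 - |a 2|) * (|c 0| + |c 1|) + |a 2| * (|c 0| / 2 + |c 2|) := by
    have := mul_le_mul_of_nonneg_left (show |a 0| ≤ 1 - |a 2| / 2 by linarith) (abs_nonneg (c 0))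
    have := mul_le_mul_of_nonneg_left (show |a 1| ≤ 1 - |a 2| by linarith) (abs_nonneg (c 1))
    linarith
  have hmax :
      (1 - |a 2|) * (|c 0| + |c 1|) + |a 2| * (|c 0| / 2 + |c 2|) ≤ hipRoofDualNorm c := by
    have h2 : 0 ≤ 1 - |a 2| := by linarith [abs_nonneg (a 1)]
    have := mul_le_mul_of_nonneg_left (le_max_left (|c 0| + |c 1|) (|c 0| / 2 + |c 2|)) h2
    have := mul_le_mul_of_nonneg_left (le_max_right (|c 0| + |c 1|) (|c 0| / 2 + |c 2|))
      (abs_nonneg (a 2))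
    unfold hipRoofDualNorm
    linarith
  exact hsum.trans (hconv.trans hmax)

lemma IsHipRoofRidge.hipRoofNorm_add {w u : Fin 3 → ℝ} (hw : IsHipRoofRidge w)
    (hu : ∀ i, 0 ≤ u i) : hipRoofNorm (w + u) = 1 + hipRoofNorm u := by
  obtain ⟨hw, hw02, hw12⟩ := hw
  have hwu : ∀ i, 0 ≤ w i + u i := fun i => add_nonneg (hw i) (hu i)
  simp only [hipRoofNorm, Pi.add_apply, abs_of_nonneg (hwu _), abs_of_nonneg (hu _)]
  rw [← max_add_add_left]
  congr 1 <;> linarith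

lemma IsHipRoofRidge.hipRoofNorm_eq_one {w : Fin 3 → ℝ} (hw : IsHipRoofRidge w) :
    hipRoofNorm w = 1 := by
  simpa [hipRoofNorm] using hw.hipRoofNorm_add (u := 0) (fun _ => le_rfl)

lemma exists_isHipRoofRidge_sum_mul_eq_hipRoofDualNorm {c : Fin 3 → ℝ} (hc : ∀ i, 0 ≤ c i) :
    ∃ w, IsHipRoofRidge w ∧ ∑ i, c i * w i = hipRoofDualNorm c := by
  simp only [hipRoofDualNorm, abs_of_nonneg (hc _)]
  rcases le_total (c 0 + c 1) (c 0 / 2 + c 2) with h | h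
  · refine ⟨![1 / 2, 0, 1], ⟨?_, by simp; norm_num, by simp⟩, ?_⟩
    · intro i; fin_cases i <;> norm_num
    · rw [max_eq_right h]; simp [Fin.sum_univ_three]; ring
  · refine ⟨![1, 1, 0], ⟨?_, by simp, by simp⟩, ?_⟩
    · intro i; fin_cases i <;> norm_num
    · rw [max_eq_left h]; simp [Fin.sum_univ_three]

section RankOne

variable {c : Fin 3 → ℝ} (v : Fin 3 → ℝ)

lemma hipRoofNorm_sum_mul_smul_le {a : Fin 3 → ℝ} (ha : hipRoofNorm a ≤ 1) :
    hipRoofNorm ((∑ i, c i * a i) • v) ≤ hipRoofDualNorm c * hipRoofNorm v := by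
  rw [hipRoofNorm_smul]
  exact mul_le_mul_of_nonneg_right (abs_sum_mul_le_hipRoofDualNorm c a ha) (hipRoofNorm_nonneg v)

lemma hipRoofOpNorm_rankOne (hc : ∀ i, 0 ≤ c i) :
    hipRoofOpNorm (fun a => (∑ i, c i * a i) • v) = hipRoofDualNorm c * hipRoofNorm v := by
  obtain ⟨w, hw, hcw⟩ := exists_isHipRoofRidge_sum_mul_eq_hipRoofDualNorm hc
  refine hipRoofOpNorm_eq_of_le_of_eq (fun a ha => hipRoofNorm_sum_mul_smul_le v ha)
    hw.hipRoofNorm_eq_one.le ?_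
  rw [hipRoofNorm_smul, hcw, abs_of_nonneg (hipRoofDualNorm_nonneg c)]

lemma hipRoofOpNorm_id_add_rankOne (hc : ∀ i, 0 ≤ c i) (hv : ∀ i, 0 ≤ v i) :
    hipRoofOpNorm (fun a => a + (∑ i, c i * a i) • v) =
      1 + hipRoofDualNorm c * hipRoofNorm v := by
  obtain ⟨w, hw, hcw⟩ := exists_isHipRoofRidge_sum_mul_eq_hipRoofDualNorm hc
  refine hipRoofOpNorm_eq_of_le_of_eq (fun a ha => ?_) hw.hipRoofNorm_eq_one.le ?_
  · exact (hipRoofNorm_add_le _ _).trans (add_le_add ha (hipRoofNorm_sum_mul_smul_le v ha))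
  · have hcw0 : 0 ≤ ∑ i, c i * w i := Finset.sum_nonneg fun i _ => mul_nonneg (hc i) (hw.1 i)
    rw [hw.hipRoofNorm_add (u := (∑ i, c i * w i) • v) fun i => mul_nonneg hcw0 (hv i),
      hipRoofNorm_smul, hcw, abs_of_nonneg (hipRoofDualNorm_nonneg c)]

end RankOne

theorem hipRoofNorm_positiveDaugavet_general
    (v c : Fin 3 → ℝ) (hv : ∀ i, 0 ≤ v i)
    (hc : ∀ i, 0 ≤ c i) :
    hipRoofOpNorm (fun a => a + (∑ i, c i * a i) • v) =
      1 + hipRoofOpNorm (fun a => (∑ i, c i * a i) • v) := by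
  rw [hipRoofOpNorm_id_add_rankOne v hc hv, hipRoofOpNorm_rankOne v hc]

/-- The norm `N (a₁, a₂, a₃) = max {|a₁| + |a₃|/2, |a₂| + |a₃|}` on `ℝ³` has the
positive Daugavet property: for every nonzero coordinatewise-nonnegative `v ∈ ℝ³` and
every nonzero linear functional with nonnegative coefficients `c`, the rank-one
operator `T a = (∑ i, c i * a i) • v` satisfies `‖Id + T‖ = 1 + ‖T‖` in the operator
norm induced by `N`. -/
theorem hipRoofNorm_positiveDaugavet
    (v c : Fin 3 → ℝ) (hv : ∀ i, 0 ≤ v i) (hv0 : v ≠ 0)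
    (hc : ∀ i, 0 ≤ c i) (hc0 : c ≠ 0) :
    hipRoofOpNorm (fun a => a + (∑ i, c i * a i) • v) =
      1 + hipRoofOpNorm (fun a => (∑ i, c i * a i) • v) :=
  hipRoofNorm_positiveDaugavet_general v c hv hc
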